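/- arXiv:0805.4001 — 2 statements merged into one kernel-verified Lean document; each statement's English description precedes it below -/
import Mathlib

section
/- Let R be a discrete valuation ring, A = R[z]/(z^n), and φ : M → N a homomorphism of finitely generated A-modules. Then: (1) φ is surjective if and only if the induced map M/zM → N/zN is surjective, and in that case the induced maps z^iM/z^{i+1}M → z^iN/z^{i+1}N are surjective for all 0 ≤ i < n; (2) φ is injective if and only if the induced map M^{(1)} → N^{(1)} on z-torsion submodules is injective, and in that case the induced maps M^{(i)}/M^{(i-1)} → N^{(i)}/N^{(i-1)} are injective for all 1 ≤ i ≤ n. -/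
open Polynomial

/-- The local model `A = R[z]/(z^n)` of a primitive multiple curve of multiplicity `n`. -/
abbrev Az (R : Type) [CommRing R] (n : ℕ) : Type :=
  R[X] ⧸ Ideal.span ({X ^ n} : Set R[X])

/-- The class of `z` (i.e. of `X`) in `A = R[z]/(z^n)`. -/
noncomputable def zc (R : Type) [CommRing R] (n : ℕ) : Az R n :=
  Ideal.Quotient.mk _ X

/-- The submodule `z^i M` of `M` (first canonical filtration). -/
noncomputable def zpowSub (R : Type) [CommRing R] (n : ℕ) (M : Type) [AddCommGroup M]
    [Module (Az R n) M] (i : ℕ) : Submodule (Az R n) M :=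
  LinearMap.range ((zc R n ^ i) • (LinearMap.id : M →ₗ[Az R n] M))

/-- The submodule `M^{(i)} = {u ∈ M : z^i • u = 0}` (second canonical filtration). -/
noncomputable def ztor (R : Type) [CommRing R] (n : ℕ) (M : Type) [AddCommGroup M]
    [Module (Az R n) M] (i : ℕ) : Submodule (Az R n) M :=
  LinearMap.ker ((zc R n ^ i) • (LinearMap.id : M →ₗ[Az R n] M))

/-!
Everything rests on `z` being nilpotent. For surjectivity, `N = φ M + z N` iterates to
`N = φ M + z^k N` for every `k`, and `z^n = 0`. For injectivity, a nonzero `u ∈ ker φ` has a last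
nonzero multiple `z^k u`, which lies in `ker φ ∩ M^{(1)}`. The statements about the graded pieces
only use that `φ` maps `z^i M` onto `z^i N` when it is surjective, and that
`φ⁻¹(N^{(i)}) = M^{(i)}` when it is injective.
-/

open LinearMap

section NilpotentScalar

variable {A M N : Type*} [CommRing A] [AddCommGroup M] [Module A M] [AddCommGroup N] [Module A N]
  {a : A}

theorem IsNilpotent.exists_pow_smul_ne_zero_and_smul_eq_zero (ha : IsNilpotent a) {x : M}
    (hx : x ≠ 0) : ∃ k, a ^ k • x ≠ 0 ∧ a • a ^ k • x = 0 := by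
  obtain ⟨n, hn⟩ := ha
  by_contra! h
  have hpow : ∀ k, a ^ k • x ≠ 0 := by
    intro k
    induction k with
    | zero => simpa using hx
    | succ k ih => simpa [pow_succ', mul_smul] using h k ih
  exact hpow n (by simp [hn])

theorem LinearMap.surjective_of_forall_eq_add_smul (ha : IsNilpotent a) (f : M →ₗ[A] N)
    (h : ∀ y, ∃ x w, y = f x + a • w) : Function.Surjective f := by
  have hpow : ∀ k y, ∃ x w, y = f x + a ^ k • w := by
    intro k
    induction k with
    | zero => exact fun y ↦ ⟨0, y, by simp⟩
    | succ k ih =>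
      intro y
      obtain ⟨x, w, rfl⟩ := ih y
      obtain ⟨x', w', rfl⟩ := h w
      refine ⟨x + a ^ k • x', w', ?_⟩
      rw [map_add, map_smul, smul_add, smul_smul, ← pow_succ, add_assoc]
  obtain ⟨n, hn⟩ := ha
  intro y
  obtain ⟨x, w, rfl⟩ := hpow n y
  exact ⟨x, by simp [hn]⟩

theorem LinearMap.surjective_iff_surjective_mod_smul (ha : IsNilpotent a) (f : M →ₗ[A] N)
    (ψ : (M ⧸ range (a • id : M →ₗ[A] M)) →ₗ[A] (N ⧸ range (a • id : N →ₗ[A] N)))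
    (hψ : ∀ x, ψ (Submodule.Quotient.mk x) = Submodule.Quotient.mk (f x)) :
    Function.Surjective f ↔ Function.Surjective ψ := by
  constructor
  · intro hf y
    obtain ⟨y, rfl⟩ := Submodule.Quotient.mk_surjective _ y
    obtain ⟨x, rfl⟩ := hf y
    exact ⟨Submodule.Quotient.mk x, hψ x⟩
  · intro hψs
    refine f.surjective_of_forall_eq_add_smul ha fun y ↦ ?_
    obtain ⟨x, hx⟩ := hψs (Submodule.Quotient.mk y)
    obtain ⟨x, rfl⟩ := Submodule.Quotient.mk_surjective _ x
    rw [hψ, Submodule.Quotient.eq] at hx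
    obtain ⟨w, hw⟩ := hx
    exact ⟨x, -w, by simp only [smul_apply, id_apply] at hw; rw [smul_neg, hw]; abel⟩

theorem LinearMap.injective_iff_injective_restrict_ker_smul (ha : IsNilpotent a)
    (f : M →ₗ[A] N) (f₁ : ker (a • id : M →ₗ[A] M) →ₗ[A] ker (a • id : N →ₗ[A] N))
    (hf₁ : ∀ u, (f₁ u : N) = f u) : Function.Injective f ↔ Function.Injective f₁ := by
  constructor
  · intro hf u v huv
    exact Subtype.ext (hf (by rw [← hf₁, ← hf₁, huv]))
  · intro hf₁i
    rw [injective_iff_map_eq_zero]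
    intro x hx
    by_contra hne
    obtain ⟨k, hk, hak⟩ := ha.exists_pow_smul_ne_zero_and_smul_eq_zero hne
    have hmem : a ^ k • x ∈ ker (a • id : M →ₗ[A] M) := hak
    have hzero : f₁ ⟨a ^ k • x, hmem⟩ = 0 :=
      Subtype.ext (by rw [hf₁, map_smul, hx, smul_zero, ZeroMemClass.coe_zero])
    exact hk (congrArg Subtype.val (hf₁i (hzero.trans (map_zero f₁).symm)))

theorem LinearMap.map_range_smul_id_of_surjective {f : M →ₗ[A] N} (hf : Function.Surjective f)
    (b : A) : (range (b • id : M →ₗ[A] M)).map f = range (b • id : N →ₗ[A] N) := by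
  ext y
  constructor
  · rintro ⟨_, ⟨x, rfl⟩, rfl⟩
    exact ⟨f x, by simp⟩
  · rintro ⟨y, rfl⟩
    obtain ⟨x, rfl⟩ := hf y
    exact ⟨b • x, ⟨x, rfl⟩, by simp⟩

theorem LinearMap.comap_ker_smul_id_of_injective {f : M →ₗ[A] N} (hf : Function.Injective f)
    (b : A) : (ker (b • id : N →ₗ[A] N)).comap f = ker (b • id : M →ₗ[A] M) := by
  ext x
  simp only [Submodule.mem_comap, mem_ker, smul_apply, id_apply]
  rw [← map_smul, map_eq_zero_iff f hf]

end NilpotentScalar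

section Subquotient

variable {R M N : Type*} [Ring R] [AddCommGroup M] [Module R M] [AddCommGroup N] [Module R N]
  (f : M →ₗ[R] N)

theorem LinearMap.surjective_subquotient_map {p : Submodule R M} {q : Submodule R N}
    (hq : q ≤ p.map f) {p₀ : Submodule R p} {q₀ : Submodule R q} (ψ : (p ⧸ p₀) →ₗ[R] (q ⧸ q₀))
    (hψ : ∀ (u : M) (hu : u ∈ p) (hv : f u ∈ q),
      ψ (Submodule.Quotient.mk ⟨u, hu⟩) = Submodule.Quotient.mk ⟨f u, hv⟩) :
    Function.Surjective ψ := by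
  intro y
  obtain ⟨⟨v, hv⟩, rfl⟩ := Submodule.Quotient.mk_surjective _ y
  obtain ⟨u, hu, rfl⟩ := hq hv
  exact ⟨Submodule.Quotient.mk ⟨u, hu⟩, hψ u hu hv⟩

theorem LinearMap.injective_subquotient_map {p : Submodule R M} {q : Submodule R N}
    (hpq : p ≤ q.comap f) {p₀ : Submodule R M} {q₀ : Submodule R N} (h : q₀.comap f ≤ p₀)
    (ψ : (p ⧸ p₀.comap p.subtype) →ₗ[R] (q ⧸ q₀.comap q.subtype))
    (hψ : ∀ (u : M) (hu : u ∈ p) (hv : f u ∈ q),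
      ψ (Submodule.Quotient.mk ⟨u, hu⟩) = Submodule.Quotient.mk ⟨f u, hv⟩) :
    Function.Injective ψ := by
  rw [injective_iff_map_eq_zero]
  intro x hx
  obtain ⟨⟨u, hu⟩, rfl⟩ := Submodule.Quotient.mk_surjective _ x
  rw [hψ u hu (hpq hu), Submodule.Quotient.mk_eq_zero] at hx
  rw [Submodule.Quotient.mk_eq_zero]
  exact h hx

end Subquotient

theorem isNilpotent_zc (R : Type) [CommRing R] (n : ℕ) : IsNilpotent (zc R n) :=
  ⟨n, by rw [zc, ← map_pow, Ideal.Quotient.eq_zero_iff_mem]; exact Ideal.mem_span_singleton_self _⟩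

theorem stmt15_general (R : Type) [CommRing R] (n : ℕ)
    (M N : Type) [AddCommGroup M] [Module (Az R n) M]
    [AddCommGroup N] [Module (Az R n) N]
    (φ : M →ₗ[Az R n] N) :
    -- (1) surjectivity criterion
    ((∀ ψ : (M ⧸ zpowSub R n M 1) →ₗ[Az R n] (N ⧸ zpowSub R n N 1),
        (∀ m : M, ψ (Submodule.Quotient.mk m) = Submodule.Quotient.mk (φ m)) →
        (Function.Surjective φ ↔ Function.Surjective ψ)) ∧
      (Function.Surjective φ → ∀ i < n,
        ∀ ψi : (zpowSub R n M i ⧸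
                  Submodule.comap (zpowSub R n M i).subtype (zpowSub R n M (i + 1))) →ₗ[Az R n]
               (zpowSub R n N i ⧸
                  Submodule.comap (zpowSub R n N i).subtype (zpowSub R n N (i + 1))),
          (∀ (u : M) (hu : u ∈ zpowSub R n M i) (hv : φ u ∈ zpowSub R n N i),
            ψi (Submodule.Quotient.mk ⟨u, hu⟩) = Submodule.Quotient.mk ⟨φ u, hv⟩) →
          Function.Surjective ψi)) ∧
    -- (2) injectivity criterion
    ((∀ φ1 : ↥(ztor R n M 1) →ₗ[Az R n] ↥(ztor R n N 1),
        (∀ u : ↥(ztor R n M 1), ((φ1 u : ↥(ztor R n N 1)) : N) = φ (u : M)) →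
        (Function.Injective φ ↔ Function.Injective φ1)) ∧
      (Function.Injective φ → ∀ i : ℕ, 1 ≤ i → i ≤ n →
        ∀ φi : (ztor R n M i ⧸
                  Submodule.comap (ztor R n M i).subtype (ztor R n M (i - 1))) →ₗ[Az R n]
               (ztor R n N i ⧸
                  Submodule.comap (ztor R n N i).subtype (ztor R n N (i - 1))),
          (∀ (u : M) (hu : u ∈ ztor R n M i) (hv : φ u ∈ ztor R n N i),
            φi (Submodule.Quotient.mk ⟨u, hu⟩) = Submodule.Quotient.mk ⟨φ u, hv⟩) →
          Function.Injective φi)) := by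
  have hz : IsNilpotent (zc R n ^ 1) := by simpa using isNilpotent_zc R n
  refine ⟨⟨fun ψ hψ ↦ φ.surjective_iff_surjective_mod_smul hz ψ hψ, ?_⟩, ?_, ?_⟩
  · intro hφ i _ ψi hψi
    exact φ.surjective_subquotient_map (φ.map_range_smul_id_of_surjective hφ _).ge ψi hψi
  · exact fun φ1 hφ1 ↦ φ.injective_iff_injective_restrict_ker_smul hz φ1 hφ1
  · intro hφ i _ _ φi hφi
    exact φ.injective_subquotient_map (φ.comap_ker_smul_id_of_injective hφ _).ge
      (φ.comap_ker_smul_id_of_injective hφ _).le φi hφi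

/-- For `A = R[z]/(z^n)` over a DVR `R` and a homomorphism `φ : M → N` of
finitely generated `A`-modules: (1) `φ` is surjective iff the induced map `M/zM → N/zN` is
surjective, and then all induced maps `z^iM/z^{i+1}M → z^iN/z^{i+1}N` are surjective;
(2) `φ` is injective iff the induced map `M^{(1)} → N^{(1)}` on `z`-torsion submodules is
injective, and then all induced maps `M^{(i)}/M^{(i-1)} → N^{(i)}/N^{(i-1)}` are injective. -/
theorem stmt15 (R : Type) [CommRing R] [IsDomain R] [IsDiscreteValuationRing R] (n : ℕ)
    (M N : Type) [AddCommGroup M] [Module (Az R n) M] [Module.Finite (Az R n) M]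
    [AddCommGroup N] [Module (Az R n) N] [Module.Finite (Az R n) N]
    (φ : M →ₗ[Az R n] N) :
    -- (1) surjectivity criterion
    ((∀ ψ : (M ⧸ zpowSub R n M 1) →ₗ[Az R n] (N ⧸ zpowSub R n N 1),
        (∀ m : M, ψ (Submodule.Quotient.mk m) = Submodule.Quotient.mk (φ m)) →
        (Function.Surjective φ ↔ Function.Surjective ψ)) ∧
      (Function.Surjective φ → ∀ i < n,
        ∀ ψi : (zpowSub R n M i ⧸
                  Submodule.comap (zpowSub R n M i).subtype (zpowSub R n M (i + 1))) →ₗ[Az R n]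
               (zpowSub R n N i ⧸
                  Submodule.comap (zpowSub R n N i).subtype (zpowSub R n N (i + 1))),
          (∀ (u : M) (hu : u ∈ zpowSub R n M i) (hv : φ u ∈ zpowSub R n N i),
            ψi (Submodule.Quotient.mk ⟨u, hu⟩) = Submodule.Quotient.mk ⟨φ u, hv⟩) →
          Function.Surjective ψi)) ∧
    -- (2) injectivity criterion
    ((∀ φ1 : ↥(ztor R n M 1) →ₗ[Az R n] ↥(ztor R n N 1),
        (∀ u : ↥(ztor R n M 1), ((φ1 u : ↥(ztor R n N 1)) : N) = φ (u : M)) →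
        (Function.Injective φ ↔ Function.Injective φ1)) ∧
      (Function.Injective φ → ∀ i : ℕ, 1 ≤ i → i ≤ n →
        ∀ φi : (ztor R n M i ⧸
                  Submodule.comap (ztor R n M i).subtype (ztor R n M (i - 1))) →ₗ[Az R n]
               (ztor R n N i ⧸
                  Submodule.comap (ztor R n N i).subtype (ztor R n N (i - 1))),
          (∀ (u : M) (hu : u ∈ ztor R n M i) (hv : φ u ∈ ztor R n N i),
            φi (Submodule.Quotient.mk ⟨u, hu⟩) = Submodule.Quotient.mk ⟨φ u, hv⟩) →
          Function.Injective φi)) :=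
  stmt15_general R n M N φ
end

section
/- Let R be a discrete valuation ring with uniformizer x, A = R[z]/(z^n), and M a finitely generated A-module with no nonzero element annihilated by a power of x. If M admits a finite resolution by finitely generated free A-modules, then M is free. -/
open Polynomial

open Pointwise

/-! Over `A = R[z]/(z^n)` the module `A/(z^i)` has the 2-periodic free resolution
`⋯ → A --z^(n-i)--> A --z^i--> A`, so `Tor^A_k(M, A/(z^i))` vanishes for all `k > 0` and all
`i ≤ n` exactly when `ker z^i = z^(n-i) M` for all `i ≤ n`. A finite free
resolution forces this: free modules have the property and it passes to `F/K` whenever `F` and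
`K` have it, so it propagates down the resolution from its zero end to `M`.

Then `M/zM` is torsion-free over the DVR `R` (if `c u ∈ zM` then `c z^(n-1) u = 0`, so
`z^(n-1) u = 0` and `u ∈ zM`), hence free. Lifting an `R`-basis of `M/zM` gives a map `A^r → M`
that is surjective because `z` is nilpotent, and injective by climbing the `z`-adic filtration
with the same property `ker z^i = z^(n-i) M`. -/

section

variable {A : Type*} [CommRing A]

def PowTorsionDivisible (z : A) (n : ℕ) (M : Type*) [AddCommGroup M] [Module A M] : Prop :=
  ∀ i ≤ n, ∀ u : M, z ^ i • u = 0 → ∃ v : M, z ^ (n - i) • v = u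

variable {z : A} {n : ℕ} {F M : Type*} [AddCommGroup F] [Module A F] [AddCommGroup M] [Module A M]

namespace PowTorsionDivisible

theorem of_subsingleton [Subsingleton M] : PowTorsionDivisible z n M :=
  fun _ _ u _ ↦ ⟨u, Subsingleton.elim _ _⟩

theorem pi {ι : Type*} {P : ι → Type*} [∀ j, AddCommGroup (P j)] [∀ j, Module A (P j)]
    (h : ∀ j, PowTorsionDivisible z n (P j)) : PowTorsionDivisible z n (∀ j, P j) := by
  intro i hi u hu
  choose v hv using fun j ↦ h j i hi (u j) (congrFun hu j)
  exact ⟨v, funext hv⟩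

theorem of_surjective (hz : z ^ n = 0) (hF : PowTorsionDivisible z n F) {π : F →ₗ[A] M}
    (hK : PowTorsionDivisible z n (LinearMap.ker π)) (hπ : Function.Surjective π) :
    PowTorsionDivisible z n M := by
  intro i hi u hu
  obtain ⟨f, rfl⟩ := hπ u
  -- `z^i f` lies in `ker π` and is killed by `z^(n-i)`, so it is `z^i g` with `g ∈ ker π`.
  obtain ⟨g, hg⟩ := hK (n - i) (Nat.sub_le n i) ⟨z ^ i • f, by simpa using hu⟩ <| by
    ext1
    simp [smul_smul, ← pow_add, Nat.sub_add_cancel hi, hz]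
  rw [Nat.sub_sub_self hi, Subtype.ext_iff, Submodule.coe_smul] at hg
  obtain ⟨h, hh⟩ := hF i hi (f - g) (by rw [smul_sub, hg, sub_self])
  refine ⟨π h, ?_⟩
  rw [← map_smul, hh, map_sub, LinearMap.mem_ker.mp g.2, sub_zero]

theorem range (hz : z ^ n = 0) (hF : PowTorsionDivisible z n F) {f : F →ₗ[A] M}
    (hK : PowTorsionDivisible z n (LinearMap.ker f)) :
    PowTorsionDivisible z n (LinearMap.range f) :=
  hF.of_surjective hz (f.ker_rangeRestrict ▸ hK) f.surjective_rangeRestrict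

theorem of_resolution (hz : z ^ n = 0) {P : ℕ → Type*} [∀ i, AddCommGroup (P i)]
    [∀ i, Module A (P i)] (hP : ∀ i, PowTorsionDivisible z n (P i)) (k : ℕ)
    (hk : ∀ i > k, Subsingleton (P i)) (d : ∀ i, P (i + 1) →ₗ[A] P i)
    (hd : ∀ i, LinearMap.ker (d i) = LinearMap.range (d (i + 1))) (ε : P 0 →ₗ[A] M)
    (hε : Function.Surjective ε) (hε0 : LinearMap.ker ε = LinearMap.range (d 0)) :
    PowTorsionDivisible z n M := by
  have hker : ∀ m j, k ≤ j + m → PowTorsionDivisible z n (LinearMap.ker (d j)) := by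
    intro m
    induction m with
    | zero =>
      intro j hj
      have := hk (j + 1) (by omega)
      exact of_subsingleton
    | succ m ih =>
      intro j hj
      rw [hd j]
      exact (hP _).range hz (ih (j + 1) (by omega))
  refine (hP 0).of_surjective hz ?_ hε
  rw [hε0]
  exact (hP 1).range hz (hker k 0 (by omega))

theorem injective_of_surjective (hz : z ^ n = 0) (hM : PowTorsionDivisible z n M)
    {φ : F →ₗ[A] M} (hφ : Function.Surjective φ) (hker : ∀ a, φ a = 0 → ∃ e, z • e = a) :
    Function.Injective φ := by
  have hker_pow : ∀ t ≤ n, ∀ a, φ a = 0 → ∃ b, z ^ t • b = a := by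
    intro t
    induction t with
    | zero => exact fun _ a _ ↦ ⟨a, by rw [pow_zero, one_smul]⟩
    | succ t ih =>
      intro ht a ha
      obtain ⟨b, rfl⟩ := ih (by omega) a ha
      -- `φ b` is killed by `z^t`, so `φ b = z^(n-t) φ c`, and `b - z^(n-t) c ∈ ker φ ⊆ z F`.
      obtain ⟨v, hv⟩ := hM t (by omega) (φ b) (by rw [← map_smul, ha])
      obtain ⟨c, rfl⟩ := hφ v
      obtain ⟨e, he⟩ := hker (b - z ^ (n - t) • c) (by rw [map_sub, map_smul, hv, sub_self])
      refine ⟨e, ?_⟩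
      rw [eq_sub_iff_add_eq] at he
      rw [← he, smul_add, smul_smul, smul_smul, ← pow_add, Nat.add_sub_cancel' (by omega), hz,
        zero_smul, add_zero, pow_succ]
  intro a₁ a₂ h
  obtain ⟨b, hb⟩ := hker_pow n le_rfl (a₁ - a₂) (by rw [map_sub, h, sub_self])
  rwa [hz, zero_smul, eq_comm, sub_eq_zero] at hb

end PowTorsionDivisible

theorem LinearMap.surjective_of_surjective_mod_nilpotent (hz : z ^ n = 0) (φ : F →ₗ[A] M)
    (h : ∀ m, ∃ a w, φ a + z • w = m) : Function.Surjective φ := by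
  have hpow : ∀ t m, ∃ a w, φ a + z ^ t • w = m := by
    intro t
    induction t with
    | zero => exact fun m ↦ ⟨0, m, by simp⟩
    | succ t ih =>
      intro m
      obtain ⟨a, w, rfl⟩ := ih m
      obtain ⟨a', w', rfl⟩ := h w
      refine ⟨a + z ^ t • a', w', ?_⟩
      simp only [map_add, map_smul, smul_add, smul_smul, ← pow_succ, add_assoc]
  intro m
  obtain ⟨a, w, rfl⟩ := hpow n m
  exact ⟨a, by simp [hz]⟩

end

section

variable {R A : Type*} [CommRing R] [CommRing A] [Algebra R A] {z : A} {n : ℕ}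
  {M : Type*} [AddCommGroup M] [Module A M] [Module R M] [IsScalarTower R A M]

theorem PowTorsionDivisible.isTorsionFree_quotient [IsDomain R] [Module.IsTorsionFree R M]
    (hz : z ^ n = 0) (hM : PowTorsionDivisible z n M) :
    Module.IsTorsionFree R (M ⧸ z • (⊤ : Submodule A M)) := by
  refine .of_smul_eq_zero fun c y hcy ↦ or_iff_not_imp_left.mpr fun hc ↦ ?_
  obtain ⟨u, rfl⟩ := Submodule.Quotient.mk_surjective _ y
  rw [← Submodule.Quotient.mk_smul, Submodule.Quotient.mk_eq_zero,
    Submodule.mem_smul_pointwise_iff_exists] at hcy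
  obtain ⟨w, -, hw⟩ := hcy
  rw [Submodule.Quotient.mk_eq_zero, Submodule.mem_smul_pointwise_iff_exists]
  cases n with
  | zero => exact ⟨0, trivial, by simpa using (congrArg (· • u) hz).symm⟩
  | succ n =>
    have hu : z ^ n • u = 0 := by
      refine (smul_eq_zero.mp ?_).resolve_left hc
      rw [smul_comm, ← hw, smul_smul, ← pow_succ, hz, zero_smul]
    obtain ⟨v, hv⟩ := hM n n.le_succ u hu
    exact ⟨v, trivial, by simpa using hv⟩

theorem PowTorsionDivisible.free_of_basis (hz : z ^ n = 0)
    (hA : ∀ a : A, ∃ c a', algebraMap R A c + z * a' = a) (hM : PowTorsionDivisible z n M)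
    {ι : Type*} [Finite ι] (b : Module.Basis ι R (M ⧸ z • (⊤ : Submodule A M))) :
    Module.Free A M := by
  cases nonempty_fintype ι
  set N := z • (⊤ : Submodule A M)
  choose u hu using fun i ↦ Submodule.Quotient.mk_surjective N (b i)
  set φ := Fintype.linearCombination A u
  have hz_mk : ∀ m : M, z • (Submodule.Quotient.mk m : M ⧸ N) = 0 := fun m ↦ by
    rw [← Submodule.Quotient.mk_smul, Submodule.Quotient.mk_eq_zero]
    exact Submodule.smul_mem_pointwise_smul m z ⊤ trivial
  have hmk : ∀ (c : ι → R) (a' : ι → A), Submodule.Quotient.mk (p := N)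
      (φ fun i ↦ algebraMap R A (c i) + z * a' i) = ∑ i, c i • b i := by
    intro c a'
    simp only [φ, Fintype.linearCombination_apply, ← Submodule.mkQ_apply, map_sum, map_smul]
    refine Finset.sum_congr rfl fun i _ ↦ ?_
    rw [Submodule.mkQ_apply, add_smul, algebraMap_smul, mul_comm, mul_smul, hz_mk, smul_zero,
      add_zero, hu]
  have hsurj : Function.Surjective φ := by
    refine φ.surjective_of_surjective_mod_nilpotent hz fun m ↦ ?_
    have h := hmk (b.repr (Submodule.Quotient.mk m)) 0
    rw [b.sum_repr, eq_comm, Submodule.Quotient.eq, Submodule.mem_smul_pointwise_iff_exists] at h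
    obtain ⟨w, -, hw⟩ := h
    exact ⟨_, w, by rw [hw, add_sub_cancel]⟩
  have hker : ∀ a, φ a = 0 → ∃ e, z • e = a := by
    intro a ha
    choose c a' hca using fun i ↦ hA (a i)
    obtain rfl : (fun i ↦ algebraMap R A (c i) + z * a' i) = a := funext hca
    have hc : c = 0 := by
      have h := hmk c a'
      rw [ha, Submodule.Quotient.mk_zero, eq_comm] at h
      exact funext <| Fintype.linearIndependent_iff.mp b.linearIndependent c h
    exact ⟨a', by ext i; simp [hc]⟩
  exact .of_equiv (LinearEquiv.ofBijective φ ⟨hM.injective_of_surjective hz hsurj hker, hsurj⟩)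

theorem PowTorsionDivisible.free [IsDomain R] [IsPrincipalIdealRing R] [Module.Finite R A]
    [Module.Finite A M] [Module.IsTorsionFree R M] (hz : z ^ n = 0)
    (hA : ∀ a : A, ∃ c a', algebraMap R A c + z * a' = a) (hM : PowTorsionDivisible z n M) :
    Module.Free A M := by
  have := hM.isTorsionFree_quotient (R := R) hz
  have : Module.Finite R M := .trans A M
  exact hM.free_of_basis hz hA (Module.Free.chooseBasis R (M ⧸ z • (⊤ : Submodule A M)))

end

theorem IsDiscreteValuationRing.isTorsionFree_of_pow_smul_eq_zero {R : Type*} [CommRing R]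
    [IsDomain R] [IsDiscreteValuationRing R] {x : R} (hx : Irreducible x) {M : Type*}
    [AddCommGroup M] [Module R M] (h : ∀ (u : M) (p : ℕ), x ^ p • u = 0 → u = 0) :
    Module.IsTorsionFree R M := by
  refine .of_smul_eq_zero fun c u hcu ↦ or_iff_not_imp_left.mpr fun hc ↦ ?_
  obtain ⟨p, w, rfl⟩ := IsDiscreteValuationRing.eq_unit_mul_pow_irreducible hc hx
  rw [mul_smul, ← Units.smul_def, smul_eq_zero_iff_eq] at hcu
  exact h u p hcu

theorem zc_pow_self (R : Type) [CommRing R] (n : ℕ) : zc R n ^ n = 0 := by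
  rw [zc, ← map_pow, Ideal.Quotient.eq_zero_iff_mem]
  exact Ideal.subset_span rfl

theorem exists_algebraMap_add_zc_mul (R : Type) [CommRing R] (n : ℕ) (a : Az R n) :
    ∃ c a', algebraMap R (Az R n) c + zc R n * a' = a := by
  obtain ⟨p, rfl⟩ := Ideal.Quotient.mk_surjective a
  refine ⟨p.coeff 0, Ideal.Quotient.mk _ p.divX, ?_⟩
  rw [zc, ← map_mul, ← Ideal.Quotient.mk_algebraMap, ← map_add, algebraMap_eq, add_comm,
    X_mul_divX_add]

theorem powTorsionDivisible_az (R : Type) [CommRing R] (n : ℕ) :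
    PowTorsionDivisible (zc R n) n (Az R n) := by
  intro i hi a ha
  obtain ⟨p, rfl⟩ := Ideal.Quotient.mk_surjective a
  obtain ⟨q, hq⟩ : X ^ n ∣ X ^ i * p := by
    rw [← Ideal.mem_span_singleton, ← Ideal.Quotient.eq_zero_iff_mem]
    simpa [zc] using ha
  have hp : p = X ^ (n - i) * q := (monic_X_pow i).isRegular.left <| by
    simp only [hq, ← mul_assoc, ← pow_add, Nat.add_sub_cancel' hi]
  exact ⟨Ideal.Quotient.mk _ q, by simp [zc, hp]⟩

/-- Let `R` be a DVR with uniformizer `x` and `A = R[z]/(z^n)`. If a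
finitely generated `A`-module `M` with no nonzero element annihilated by a power of `x`
admits a finite resolution `0 → A^{r_k} → ⋯ → A^{r_0} → M → 0` by finitely generated free
`A`-modules, then `M` is free. -/
theorem stmt17 (R : Type) [CommRing R] [IsDomain R] [IsDiscreteValuationRing R] (n : ℕ)
    (x : R) (hx : Irreducible x)
    (M : Type) [AddCommGroup M] [Module (Az R n) M] [Module.Finite (Az R n) M]
    (htf : ∀ (u : M) (p : ℕ), (algebraMap R (Az R n) x) ^ p • u = 0 → u = 0)
    (k : ℕ) (r : ℕ → ℕ) (hfin : ∀ i > k, r i = 0)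
    (d : ∀ i : ℕ, (Fin (r (i + 1)) → Az R n) →ₗ[Az R n] (Fin (r i) → Az R n))
    (ε : (Fin (r 0) → Az R n) →ₗ[Az R n] M)
    (hε : Function.Surjective ε)
    (h0 : LinearMap.ker ε = LinearMap.range (d 0))
    (hexact : ∀ i : ℕ, LinearMap.ker (d i) = LinearMap.range (d (i + 1))) :
    Module.Free (Az R n) M := by
  have hM : PowTorsionDivisible (zc R n) n M := by
    refine .of_resolution (P := fun i ↦ Fin (r i) → Az R n) (zc_pow_self R n)
      (fun _ ↦ .pi fun _ ↦ powTorsionDivisible_az R n) k (fun i hi ↦ ?_) d hexact ε hε h0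
    have : IsEmpty (Fin (r i)) := by rw [hfin i hi]; infer_instance
    infer_instance
  let : Module R M := .compHom M (algebraMap R (Az R n))
  have : IsScalarTower R (Az R n) M := .of_compHom R (Az R n) M
  have : Module.Finite R (Az R n) := (monic_X_pow n).finite_quotient
  have : Module.IsTorsionFree R M :=
    IsDiscreteValuationRing.isTorsionFree_of_pow_smul_eq_zero hx fun u p h ↦
      htf u p (by rwa [← map_pow, algebraMap_smul])
  exact hM.free (zc_pow_self R n) (exists_algebraMap_add_zc_mul R n)
end
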